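/- Let C ⊆ ℝⁿ be a nonempty compact convex set and K = cone({1} × C) ⊆ ℝ^{n+1}. For every face F_C of C, the set cone({1} × F_C) is a face of K. -/

import Mathlib

/-!
Under the injective affine map `x ↦ (1, x)` a face of `C` is carried to a face of `{1} × C`, so it
suffices to show: if `S` lies in a hyperplane `ℓ = 1` and `F` is a face of `S`, then `cone F` is a
face of `cone S`. Applying `ℓ` to `a • x + b • y = c • z` with `x, y ∈ S` and `z ∈ F` gives
`a + b = c`; hence `z = (a / c) • x + (b / c) • y`, and the face property of `F` applies.
-/

open Pointwise RealInnerProductSpace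

/-- The conic hull: all nonnegative multiples of elements of `S`. -/
def coneHull {E : Type*} [AddCommMonoid E] [Module ℝ E] (S : Set E) : Set E :=
  {y | ∃ c : ℝ, 0 ≤ c ∧ ∃ x ∈ S, y = c • x}

/-- The set `{1} × C ⊆ ℝ^{n+1}`. -/
def lift1 {n : ℕ} (C : Set (EuclideanSpace ℝ (Fin n))) :
    Set (EuclideanSpace ℝ (Fin (n + 1))) :=
  {z | ∃ x ∈ C, z = (WithLp.equiv 2 (Fin (n + 1) → ℝ)).symm (Fin.cons 1 x)}

/-- `F` is a face of the convex set `C`: a nonempty convex subset such that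
`α • x + (1 - α) • y ∈ F` with `x, y ∈ C` and `α ∈ (0,1)` implies `x, y ∈ F`. -/
def IsFaceOfSet {E : Type*} [AddCommGroup E] [Module ℝ E] (C F : Set E) : Prop :=
  F.Nonempty ∧ F ⊆ C ∧ Convex ℝ F ∧
    ∀ x ∈ C, ∀ y ∈ C, ∀ α : ℝ, α ∈ Set.Ioo (0 : ℝ) 1 →
      α • x + (1 - α) • y ∈ F → x ∈ F ∧ y ∈ F

/-- `F` is a face of the cone `K`: a nonempty convex subset such that
`x + y ∈ F` with `x, y ∈ K` implies `x, y ∈ F`. -/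
def IsFaceOfCone {E : Type*} [AddCommGroup E] [Module ℝ E] (K F : Set E) : Prop :=
  F.Nonempty ∧ F ⊆ K ∧ Convex ℝ F ∧
    ∀ x y, x ∈ K → y ∈ K → x + y ∈ F → x ∈ F ∧ y ∈ F

section

variable {E V : Type*} [AddCommGroup E] [Module ℝ E] [AddCommGroup V] [Module ℝ V]

theorem smul_mem_coneHull {S : Set V} {c : ℝ} (hc : 0 ≤ c) {x : V} (hx : x ∈ S) :
    c • x ∈ coneHull S :=
  ⟨c, hc, x, hx, rfl⟩

theorem coneHull_mono {S T : Set V} (h : S ⊆ T) : coneHull S ⊆ coneHull T := by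
  rintro _ ⟨c, hc, x, hx, rfl⟩
  exact smul_mem_coneHull hc (h hx)

theorem subset_coneHull (S : Set V) : S ⊆ coneHull S := fun x hx => by
  simpa using smul_mem_coneHull zero_le_one hx

theorem smul_mem_coneHull_of_eq_zero_or {S : Set V} (hS : S.Nonempty) {c : ℝ} (hc : 0 ≤ c)
    {x : V} (hx : c = 0 ∨ x ∈ S) : c • x ∈ coneHull S := by
  rcases hx with rfl | hx
  · obtain ⟨y, hy⟩ := hS
    simpa using smul_mem_coneHull le_rfl hy
  · exact smul_mem_coneHull hc hx

theorem add_smul_eq_smul_div_add {a b : ℝ} (hab : a + b ≠ 0) (x y : V) :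
    a • x + b • y = (a + b) • ((a / (a + b)) • x + (b / (a + b)) • y) := by
  rw [smul_add, smul_smul, smul_smul, mul_div_cancel₀ _ hab, mul_div_cancel₀ _ hab]

theorem Convex.add_smul_mem_coneHull {S : Set V} (hS : Convex ℝ S) {x y : V} (hx : x ∈ S)
    (hy : y ∈ S) {a b : ℝ} (ha : 0 ≤ a) (hb : 0 ≤ b) : a • x + b • y ∈ coneHull S := by
  rcases (add_nonneg ha hb).eq_or_lt with hab | hab
  · obtain ⟨rfl, rfl⟩ : a = 0 ∧ b = 0 := ⟨by linarith, by linarith⟩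
    simpa using smul_mem_coneHull le_rfl hx
  · rw [add_smul_eq_smul_div_add hab.ne']
    exact smul_mem_coneHull hab.le (hS hx hy (by positivity) (by positivity) (by field_simp))

theorem Convex.coneHull {S : Set V} (hS : Convex ℝ S) : Convex ℝ (coneHull S) := by
  rintro _ ⟨a, ha, x, hx, rfl⟩ _ ⟨b, hb, y, hy, rfl⟩ s t hs ht -
  rw [smul_smul, smul_smul]
  exact hS.add_smul_mem_coneHull hx hy (by positivity) (by positivity)

theorem IsFaceOfSet.image {C F : Set E} (hF : IsFaceOfSet C F) {f : E →ᵃ[ℝ] V}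
    (hf : Function.Injective f) : IsFaceOfSet (f '' C) (f '' F) := by
  obtain ⟨hne, hsub, hconv, hext⟩ := hF
  refine ⟨hne.image f, Set.image_mono hsub, hconv.affine_image f, ?_⟩
  rintro _ ⟨x, hx, rfl⟩ _ ⟨y, hy, rfl⟩ α hα ⟨z, hz, hfz⟩
  rw [← Convex.combo_affine_apply (add_sub_cancel α 1)] at hfz
  obtain ⟨hxF, hyF⟩ := hext x hx y hy α hα (hf hfz ▸ hz)
  exact ⟨Set.mem_image_of_mem f hxF, Set.mem_image_of_mem f hyF⟩

theorem IsFaceOfSet.eq_zero_or_mem {C F : Set V} (hF : IsFaceOfSet C F) {x y : V}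
    (hx : x ∈ C) (hy : y ∈ C) {a b : ℝ} (ha : 0 ≤ a) (hb : 0 ≤ b) (hab : a + b = 1)
    (hxy : a • x + b • y ∈ F) : (a = 0 ∨ x ∈ F) ∧ (b = 0 ∨ y ∈ F) := by
  rcases ha.eq_or_lt with rfl | ha
  · obtain rfl : b = 1 := by linarith
    exact ⟨Or.inl rfl, Or.inr (by simpa using hxy)⟩
  rcases hb.eq_or_lt with rfl | hb
  · obtain rfl : a = 1 := by linarith
    exact ⟨Or.inr (by simpa using hxy), Or.inl rfl⟩
  obtain rfl : b = 1 - a := by linarith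
  obtain ⟨hxF, hyF⟩ := hF.2.2.2 x hx y hy a ⟨ha, by linarith⟩ hxy
  exact ⟨Or.inr hxF, Or.inr hyF⟩

theorem IsFaceOfSet.isFaceOfCone_coneHull {C F : Set V} (hF : IsFaceOfSet C F)
    (ℓ : V →ₗ[ℝ] ℝ) (hℓ : ∀ x ∈ C, ℓ x = 1) :
    IsFaceOfCone (coneHull C) (coneHull F) := by
  obtain ⟨hne, hsub, hconv, -⟩ := id hF
  refine ⟨hne.mono (subset_coneHull F), coneHull_mono hsub, hconv.coneHull, ?_⟩
  rintro _ _ ⟨a, ha, x, hx, rfl⟩ ⟨b, hb, y, hy, rfl⟩ ⟨c, hc, z, hz, hxyz⟩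
  have habc : a + b = c := by
    simpa [hℓ x hx, hℓ y hy, hℓ z (hsub hz)] using congrArg ℓ hxyz
  have key : (a = 0 ∨ x ∈ F) ∧ (b = 0 ∨ y ∈ F) := by
    rcases hc.eq_or_lt with rfl | hc
    · exact ⟨Or.inl (by linarith), Or.inl (by linarith)⟩
    have hz' : (a / c) • x + (b / c) • y = z := by
      rw [← habc] at hxyz hc ⊢
      exact smul_right_injective V hc.ne'
        ((add_smul_eq_smul_div_add hc.ne' x y).symm.trans hxyz)
    have := hF.eq_zero_or_mem hx hy (div_nonneg ha hc.le) (div_nonneg hb hc.le)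
      (by rw [← add_div, habc, div_self hc.ne']) (hz' ▸ hz)
    simpa only [div_eq_zero_iff, hc.ne', or_false] using this
  exact ⟨smul_mem_coneHull_of_eq_zero_or hne ha key.1,
    smul_mem_coneHull_of_eq_zero_or hne hb key.2⟩

end

noncomputable def homogenize (n : ℕ) :
    EuclideanSpace ℝ (Fin n) →ᵃ[ℝ] EuclideanSpace ℝ (Fin (n + 1)) where
  toFun x := (WithLp.equiv 2 (Fin (n + 1) → ℝ)).symm (Fin.cons 1 x)
  linear := (WithLp.linearEquiv 2 ℝ (Fin (n + 1) → ℝ)).symm.toLinearMap ∘ₗ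
    (LinearMap.vecCons 0 (WithLp.linearEquiv 2 ℝ (Fin n → ℝ)).toLinearMap)
  map_vadd' x v := by
    ext i
    refine Fin.cases ?_ (fun j => ?_) i <;> simp

theorem homogenize_injective (n : ℕ) : Function.Injective (homogenize n) := fun x y h =>
  WithLp.ofLp_injective 2 (by simpa [homogenize] using congrArg (fun z => Fin.tail z.ofLp) h)

theorem homogenize_apply_zero {n : ℕ} (x : EuclideanSpace ℝ (Fin n)) :
    homogenize n x 0 = 1 := by
  simp [homogenize]

theorem lift1_eq_image {n : ℕ} (C : Set (EuclideanSpace ℝ (Fin n))) :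
    lift1 C = homogenize n '' C := by
  ext z
  simp [lift1, homogenize, eq_comm]

theorem stmt_5_general (n : ℕ) (C : Set (EuclideanSpace ℝ (Fin n)))
    (FC : Set (EuclideanSpace ℝ (Fin n))) (hFC : IsFaceOfSet C FC) :
    IsFaceOfCone (coneHull (lift1 C)) (coneHull (lift1 FC)) := by
  rw [lift1_eq_image, lift1_eq_image]
  refine (hFC.image (homogenize_injective n)).isFaceOfCone_coneHull
    (EuclideanSpace.proj (0 : Fin (n + 1)) : _ →L[ℝ] ℝ).toLinearMap ?_
  rintro _ ⟨x, -, rfl⟩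
  exact homogenize_apply_zero x

theorem stmt_5 (n : ℕ) (C : Set (EuclideanSpace ℝ (Fin n))) (hne : C.Nonempty)
    (hcomp : IsCompact C) (hconv : Convex ℝ C)
    (FC : Set (EuclideanSpace ℝ (Fin n))) (hFC : IsFaceOfSet C FC) :
    IsFaceOfCone (coneHull (lift1 C)) (coneHull (lift1 FC)) :=
  stmt_5_general n C FC hFC
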